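/- arXiv:2512.12361 — 5 statements merged into one kernel-verified Lean document; each statement's English description precedes it below -/
import Mathlib

section
/- Let X be a uniformly convex Banach space, Ω, Δ nonempty, closed and convex subsets of X, and Ξ : X → X a cyclic orbital contraction on Ω ∪ Δ with constant η ∈ (0,1). Fix ς₀ ∈ Ω and define ς_{n+1} = Ξς_n for all n ≥ 0. Then ‖ς_{2n} − ς_{2n+2}‖ → 0 and ‖ς_{2n+1} − ς_{2n+3}‖ → 0 as n → ∞. -/
/-!
Let `D = dist(Ω, Δ)` and let `r n` be the supremum of `‖ς_a - ς_b‖` over indices `a, b ≥ n` of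
different parity. Every distance entering the contraction inequality at `(ς_a, ς_b)` is again such
a distance, so `r (n + 1) ≤ η * r n + (1 - η) * D`; since `r n ≥ D`, this forces `r n → D`, and
with it `‖ς_n - ς_{n+1}‖ → D`. The midpoint of `ς_n` and `ς_{n+2}` lies in the same convex set as
they do, so `‖(ς_n - ς_{n+1}) + (ς_{n+2} - ς_{n+1})‖ ≥ 2 * D`, and uniform convexity then forces
`‖ς_n - ς_{n+2}‖ → 0`.
-/

open Filter Metric

open Set Topology

section UniformConvexity

variable {E : Type*} [NormedAddCommGroup E] [NormedSpace ℝ E] [UniformConvexSpace E]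

theorem exists_forall_norm_add_le_two_sub_mul {ε : ℝ} (hε : 0 < ε) :
    ∃ δ, 0 < δ ∧ ∀ ⦃r : ℝ⦄, 0 ≤ r → ∀ ⦃x y : E⦄, ‖x‖ ≤ r → ‖y‖ ≤ r →
      ε * r ≤ ‖x - y‖ → ‖x + y‖ ≤ (2 - δ) * r := by
  obtain ⟨δ, hδ, h⟩ := exists_forall_closed_ball_dist_add_le_two_sub E hε
  refine ⟨δ, hδ, fun r hr x y hx hy hxy => ?_⟩
  rcases hr.eq_or_lt with rfl | hr
  · rw [norm_le_zero_iff.1 hx, norm_le_zero_iff.1 hy]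
    simp
  have hscale : ∀ z : E, ‖r⁻¹ • z‖ = ‖z‖ / r := fun z => by
    rw [norm_smul_of_nonneg (inv_nonneg.2 hr.le), inv_mul_eq_div]
  have := @h (r⁻¹ • x) (by rw [hscale]; exact div_le_one_of_le₀ hx hr.le) (r⁻¹ • y)
    (by rw [hscale]; exact div_le_one_of_le₀ hy hr.le)
    (by rw [← smul_sub, hscale, le_div_iff₀ hr]; exact hxy)
  rwa [← smul_add, hscale, div_le_iff₀ hr] at this

theorem tendsto_norm_sub_of_two_mul_le_norm_add {ι : Type*} {l : Filter ι} {a b : ι → E}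
    {d : ℝ} (ha : Tendsto (fun i => ‖a i‖) l (𝓝 d)) (hb : Tendsto (fun i => ‖b i‖) l (𝓝 d))
    (hab : ∀ i, 2 * d ≤ ‖a i + b i‖) :
    Tendsto (fun i => ‖a i - b i‖) l (𝓝 0) := by
  refine tendsto_order.2 ⟨fun e he => .of_forall fun i => he.trans_le (norm_nonneg _),
    fun ε hε => ?_⟩
  rcases le_or_gt d 0 with hd | hd
  · filter_upwards [ha.eventually (gt_mem_nhds (show d < ε / 2 by linarith)),
      hb.eventually (gt_mem_nhds (show d < ε / 2 by linarith))] with i hai hbi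
    exact (norm_sub_le _ _).trans_lt (by linarith)
  obtain ⟨δ, hδ, h⟩ :=
    exists_forall_norm_add_le_two_sub_mul (E := E) (div_pos hε (by positivity : 0 < 2 * d))
  set R : ι → ℝ := fun i => max ‖a i‖ ‖b i‖
  have hR : Tendsto R l (𝓝 d) := by simpa using ha.max hb
  filter_upwards [hR.eventually (gt_mem_nhds (show d < 2 * d by linarith)),
    (hR.const_mul (2 - δ)).eventually (gt_mem_nhds (show (2 - δ) * d < 2 * d by nlinarith))]
    with i hR2 hRδ
  by_contra! hle
  have hεR : ε / (2 * d) * R i ≤ ε := by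
    rw [div_mul_eq_mul_div, div_le_iff₀ (by positivity)]
    nlinarith
  have := h ((norm_nonneg _).trans (le_max_left _ _)) (le_max_left _ _) (le_max_right _ _)
    (hεR.trans hle)
  linarith [hab i]

end UniformConvexity

theorem tendsto_of_forall_le_of_succ_sub_le_mul {r : ℕ → ℝ} {c d : ℝ} (hc0 : 0 ≤ c) (hc1 : c < 1)
    (hd : ∀ n, d ≤ r n) (hr : ∀ n, r (n + 1) - d ≤ c * (r n - d)) :
    Tendsto r atTop (𝓝 d) := by
  have hgeom : ∀ n, r n ≤ d + c ^ n * (r 0 - d) := fun n => by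
    have := le_geom (u := fun n => r n - d) hc0 n fun k _ => hr k
    linarith
  have hlim : Tendsto (fun n => d + c ^ n * (r 0 - d)) atTop (𝓝 d) := by
    simpa using ((tendsto_pow_atTop_nhds_zero_of_lt_one hc0 hc1).mul_const (r 0 - d)).const_add d
  exact tendsto_of_tendsto_of_tendsto_of_le_of_le tendsto_const_nhds hlim hd hgeom

theorem Set.MapsTo.iterate_mem_of_even {α : Type*} {f : α → α} {s t : Set α}
    (hst : MapsTo f s t) (hts : MapsTo f t s) {x : α} (hx : x ∈ s) {n : ℕ} (hn : Even n) :
    f^[n] x ∈ s := by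
  obtain ⟨k, rfl⟩ := hn
  rw [← two_mul, Function.iterate_mul]
  exact (hts.comp hst).iterate k hx

theorem Set.MapsTo.iterate_mem_of_odd {α : Type*} {f : α → α} {s t : Set α}
    (hst : MapsTo f s t) (hts : MapsTo f t s) {x : α} (hx : x ∈ s) {n : ℕ} (hn : Odd n) :
    f^[n] x ∈ t := by
  obtain ⟨k, rfl⟩ := hn
  have := hst (hst.iterate_mem_of_even hts hx (even_two_mul k))
  rwa [← Function.iterate_succ_apply' f] at this

section OrbitalContraction

variable {X : Type*} [NormedAddCommGroup X]

noncomputable def setDist (Ω Δ : Set X) : ℝ :=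
  sInf (Set.image2 (fun x y => ‖x - y‖) Ω Δ)

theorem setDist_le_norm_sub {Ω Δ : Set X} {x y : X} (hx : x ∈ Ω) (hy : y ∈ Δ) :
    setDist Ω Δ ≤ ‖x - y‖ :=
  csInf_le ⟨0, by rintro _ ⟨x, -, y, -, rfl⟩; exact norm_nonneg _⟩ ⟨x, hx, y, hy, rfl⟩

theorem setDist_comm (Ω Δ : Set X) : setDist Ω Δ = setDist Δ Ω := by
  simp only [setDist, Set.image2_swap (fun x y => ‖x - y‖) Ω, norm_sub_rev]

theorem two_mul_setDist_le_norm_add [NormedSpace ℝ X] {Ω Δ : Set X} (hΩ : Convex ℝ Ω)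
    {x z y : X} (hx : x ∈ Ω) (hz : z ∈ Ω) (hy : y ∈ Δ) :
    2 * setDist Ω Δ ≤ ‖(x - y) + (z - y)‖ := by
  have hmid := setDist_le_norm_sub (hΩ hx hz (by norm_num : (0 : ℝ) ≤ 1 / 2)
    (by norm_num : (0 : ℝ) ≤ 1 / 2) (by norm_num)) hy
  have heq : (1 / 2 : ℝ) • x + (1 / 2 : ℝ) • z - y = (1 / 2 : ℝ) • ((x - y) + (z - y)) := by
    module
  rw [heq, norm_smul_of_nonneg (by norm_num)] at hmid
  linarith

theorem setDist_le_norm_iterate_sub {Ξ : X → X} {Ω Δ : Set X} (hΩΔ : MapsTo Ξ Ω Δ)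
    (hΔΩ : MapsTo Ξ Δ Ω) {x : X} (hx : x ∈ Ω) {a b : ℕ} (hab : Odd (a + b)) :
    setDist Ω Δ ≤ ‖Ξ^[a] x - Ξ^[b] x‖ := by
  rcases Nat.even_or_odd a with ha | ha
  · exact setDist_le_norm_sub (hΩΔ.iterate_mem_of_even hΔΩ hx ha)
      (hΩΔ.iterate_mem_of_odd hΔΩ hx (by rwa [Nat.odd_add', iff_true_intro ha, iff_true] at hab))
  · rw [norm_sub_rev]
    exact setDist_le_norm_sub
      (hΩΔ.iterate_mem_of_even hΔΩ hx (by rwa [Nat.odd_add, iff_true_intro ha, true_iff] at hab))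
      (hΩΔ.iterate_mem_of_odd hΔΩ hx ha)

noncomputable def orbitalSup (Ξ : X → X) (ς ϑ : X) : ℝ :=
  sSup { r : ℝ |
      (∃ i j : ℕ, Odd ((i : ℤ) - j) ∧ r = ‖Ξ^[i] ς - Ξ^[j] ς‖) ∨
      (∃ k l : ℕ, Odd ((k : ℤ) - l) ∧ r = ‖Ξ^[k] ϑ - Ξ^[l] ϑ‖) ∨
      (∃ p q : ℕ, Even ((p : ℤ) - q) ∧ r = ‖Ξ^[p] ς - Ξ^[q] ϑ‖) }

structure IsCyclicOrbitalContraction (Ξ : X → X) (Ω Δ : Set X) (η : ℝ) : Prop where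
  mapsTo_left : MapsTo Ξ Ω Δ
  mapsTo_right : MapsTo Ξ Δ Ω
  isBounded_orbit : ∀ x, Bornology.IsBounded (range fun n => Ξ^[n] x)
  norm_sub_le : ∀ ς ∈ Ω, ∀ ϑ ∈ Δ,
    ‖Ξ ς - Ξ ϑ‖ ≤ η * orbitalSup Ξ ς ϑ + (1 - η) * setDist Ω Δ

noncomputable def oddTailDiam (u : ℕ → X) (n : ℕ) : ℝ :=
  sSup { r : ℝ | ∃ a b : ℕ, n ≤ a ∧ n ≤ b ∧ Odd (a + b) ∧ r = ‖u a - u b‖ }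

theorem norm_sub_le_oddTailDiam {u : ℕ → X} (hu : Bornology.IsBounded (range u)) {n a b : ℕ}
    (ha : n ≤ a) (hb : n ≤ b) (hab : Odd (a + b)) : ‖u a - u b‖ ≤ oddTailDiam u n := by
  obtain ⟨C, hC⟩ := isBounded_iff_forall_norm_le.1 hu
  refine le_csSup ⟨2 * C, ?_⟩ ⟨a, b, ha, hb, hab, rfl⟩
  rintro _ ⟨a, b, -, -, -, rfl⟩
  linarith [norm_sub_le (u a) (u b), hC _ ⟨a, rfl⟩, hC _ ⟨b, rfl⟩]

theorem oddTailDiam_le {u : ℕ → X} {n : ℕ} {c : ℝ}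
    (h : ∀ a b, n ≤ a → n ≤ b → Odd (a + b) → ‖u a - u b‖ ≤ c) : oddTailDiam u n ≤ c :=
  csSup_le ⟨_, n, n + 1, le_rfl, n.le_succ, by simp, rfl⟩ <| by
    rintro _ ⟨a, b, ha, hb, hab, rfl⟩
    exact h a b ha hb hab

theorem orbitalSup_iterate_le_oddTailDiam {Ξ : X → X} {x : X}
    (hx : Bornology.IsBounded (range fun n => Ξ^[n] x)) {n a b : ℕ} (ha : n ≤ a) (hb : n ≤ b)
    (hab : Odd (a + b)) :
    orbitalSup Ξ (Ξ^[a] x) (Ξ^[b] x) ≤ oddTailDiam (fun k => Ξ^[k] x) n := by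
  refine csSup_le ⟨_, .inr (.inr ⟨0, 0, by simp, rfl⟩)⟩ ?_
  simp only [← Function.iterate_add_apply]
  rintro _ (⟨i, j, hij, rfl⟩ | ⟨i, j, hij, rfl⟩ | ⟨i, j, hij, rfl⟩) <;>
    refine norm_sub_le_oddTailDiam hx (by omega) (by omega) ?_
  all_goals
    simp only [Int.odd_iff, Int.even_iff, Nat.odd_iff] at hij hab ⊢
    omega

namespace IsCyclicOrbitalContraction

variable {Ξ : X → X} {Ω Δ : Set X} {η : ℝ} {x : X}

theorem norm_iterate_succ_sub_le (h : IsCyclicOrbitalContraction Ξ Ω Δ η) (hη : 0 ≤ η)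
    (hx : x ∈ Ω) {n a b : ℕ} (ha : n ≤ a) (hb : n ≤ b) (hab : Odd (a + b)) :
    ‖Ξ^[a + 1] x - Ξ^[b + 1] x‖ ≤
      η * oddTailDiam (fun k => Ξ^[k] x) n + (1 - η) * setDist Ω Δ := by
  have key : ∀ a b, n ≤ a → n ≤ b → Odd (a + b) → Even a →
      ‖Ξ^[a + 1] x - Ξ^[b + 1] x‖ ≤
        η * oddTailDiam (fun k => Ξ^[k] x) n + (1 - η) * setDist Ω Δ := by
    intro a b ha hb hab hae
    have hbo : Odd b := by rwa [Nat.odd_add', iff_true_intro hae, iff_true] at hab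
    rw [Function.iterate_succ_apply', Function.iterate_succ_apply']
    refine (h.norm_sub_le _ (h.mapsTo_left.iterate_mem_of_even h.mapsTo_right hx hae) _
      (h.mapsTo_left.iterate_mem_of_odd h.mapsTo_right hx hbo)).trans ?_
    gcongr
    exact orbitalSup_iterate_le_oddTailDiam (h.isBounded_orbit x) ha hb hab
  rcases Nat.even_or_odd a with hae | hao
  · exact key a b ha hb hab hae
  · rw [norm_sub_rev]
    exact key b a hb ha (by rwa [add_comm])
      (by rwa [Nat.odd_add, iff_true_intro hao, true_iff] at hab)

theorem oddTailDiam_succ_le (h : IsCyclicOrbitalContraction Ξ Ω Δ η) (hη : 0 ≤ η) (hx : x ∈ Ω)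
    (n : ℕ) :
    oddTailDiam (fun k => Ξ^[k] x) (n + 1) ≤
      η * oddTailDiam (fun k => Ξ^[k] x) n + (1 - η) * setDist Ω Δ := by
  refine oddTailDiam_le fun a b ha hb hab => ?_
  obtain ⟨a, rfl⟩ : ∃ a', a = a' + 1 := ⟨a - 1, by omega⟩
  obtain ⟨b, rfl⟩ : ∃ b', b = b' + 1 := ⟨b - 1, by omega⟩
  exact h.norm_iterate_succ_sub_le hη hx (by omega) (by omega)
    (by simp only [Nat.odd_iff] at hab ⊢; omega)

theorem setDist_le_oddTailDiam (h : IsCyclicOrbitalContraction Ξ Ω Δ η) (hx : x ∈ Ω) (n : ℕ) :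
    setDist Ω Δ ≤ oddTailDiam (fun k => Ξ^[k] x) n :=
  (setDist_le_norm_iterate_sub h.mapsTo_left h.mapsTo_right hx (odd_add_self_one' (a := n))).trans
    (norm_sub_le_oddTailDiam (h.isBounded_orbit x) le_rfl n.le_succ (odd_add_self_one' (a := n)))

theorem tendsto_oddTailDiam (h : IsCyclicOrbitalContraction Ξ Ω Δ η) (hη0 : 0 ≤ η) (hη1 : η < 1)
    (hx : x ∈ Ω) : Tendsto (oddTailDiam fun k => Ξ^[k] x) atTop (𝓝 (setDist Ω Δ)) :=
  tendsto_of_forall_le_of_succ_sub_le_mul hη0 hη1 (h.setDist_le_oddTailDiam hx) fun n => by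
    linarith [h.oddTailDiam_succ_le hη0 hx n]

theorem tendsto_norm_iterate_sub_iterate_succ (h : IsCyclicOrbitalContraction Ξ Ω Δ η)
    (hη0 : 0 ≤ η) (hη1 : η < 1) (hx : x ∈ Ω) :
    Tendsto (fun n => ‖Ξ^[n] x - Ξ^[n + 1] x‖) atTop (𝓝 (setDist Ω Δ)) :=
  tendsto_of_tendsto_of_tendsto_of_le_of_le tendsto_const_nhds (h.tendsto_oddTailDiam hη0 hη1 hx)
    (fun _ => setDist_le_norm_iterate_sub h.mapsTo_left h.mapsTo_right hx odd_add_self_one')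
    (fun n => norm_sub_le_oddTailDiam (h.isBounded_orbit x) le_rfl n.le_succ odd_add_self_one')

theorem tendsto_norm_iterate_sub_iterate_add_two [NormedSpace ℝ X] [UniformConvexSpace X]
    (h : IsCyclicOrbitalContraction Ξ Ω Δ η) (hη0 : 0 ≤ η) (hη1 : η < 1) (hΩ : Convex ℝ Ω)
    (hΔ : Convex ℝ Δ) (hx : x ∈ Ω) :
    Tendsto (fun n => ‖Ξ^[n] x - Ξ^[n + 2] x‖) atTop (𝓝 0) := by
  have hstep := h.tendsto_norm_iterate_sub_iterate_succ hη0 hη1 hx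
  have hstep' : Tendsto (fun n => ‖Ξ^[n + 2] x - Ξ^[n + 1] x‖) atTop (𝓝 (setDist Ω Δ)) :=
    (hstep.comp (tendsto_add_atTop_nat 1)).congr fun n => norm_sub_rev _ _
  have hmid : ∀ n, 2 * setDist Ω Δ ≤ ‖(Ξ^[n] x - Ξ^[n + 1] x) + (Ξ^[n + 2] x - Ξ^[n + 1] x)‖ := by
    intro n
    have hΩ' : ∀ {m}, Even m → Ξ^[m] x ∈ Ω := h.mapsTo_left.iterate_mem_of_even h.mapsTo_right hx
    have hΔ' : ∀ {m}, Odd m → Ξ^[m] x ∈ Δ := h.mapsTo_left.iterate_mem_of_odd h.mapsTo_right hx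
    rcases Nat.even_or_odd n with hn | hn
    · exact two_mul_setDist_le_norm_add hΩ (hΩ' hn) (hΩ' (hn.add even_two)) (hΔ' hn.add_one)
    · rw [setDist_comm]
      exact two_mul_setDist_le_norm_add hΔ (hΔ' hn) (hΔ' (hn.add_even even_two)) (hΩ' hn.add_one)
  simpa only [sub_sub_sub_cancel_right] using
    tendsto_norm_sub_of_two_mul_le_norm_add hstep hstep' hmid

end IsCyclicOrbitalContraction

end OrbitalContraction

theorem stmt10_general {X : Type*} [NormedAddCommGroup X] [NormedSpace ℝ X] [UniformConvexSpace X]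
    (Ω Δ : Set X) (hΩconv : Convex ℝ Ω) (hΔconv : Convex ℝ Δ)
    (Ξ : X → X) (η : ℝ) (hη : η ∈ Set.Ioo (0 : ℝ) 1)
    (hcycΩ : Set.MapsTo Ξ Ω Δ) (hcycΔ : Set.MapsTo Ξ Δ Ω)
    (hbdd : ∀ x : X, Bornology.IsBounded (Set.range fun n => Ξ^[n] x))
    (hcontr : ∀ ς ∈ Ω, ∀ ϑ ∈ Δ,
      ‖Ξ ς - Ξ ϑ‖ ≤ η * sSup { r : ℝ |
      (∃ i j : ℕ, Odd ((i : ℤ) - j) ∧ r = ‖Ξ^[i] ς - Ξ^[j] ς‖) ∨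
      (∃ k l : ℕ, Odd ((k : ℤ) - l) ∧ r = ‖Ξ^[k] ϑ - Ξ^[l] ϑ‖) ∨
      (∃ p q : ℕ, Even ((p : ℤ) - q) ∧ r = ‖Ξ^[p] ς - Ξ^[q] ϑ‖) }
        + (1 - η) * sInf (Set.image2 (fun x y => ‖x - y‖) Ω Δ))
    (ς₀ : X) (hς₀ : ς₀ ∈ Ω) :
    Tendsto (fun n => ‖Ξ^[2 * n] ς₀ - Ξ^[2 * n + 2] ς₀‖) atTop (nhds 0) ∧
      Tendsto (fun n => ‖Ξ^[2 * n + 1] ς₀ - Ξ^[2 * n + 3] ς₀‖) atTop (nhds 0) := by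
  have h : IsCyclicOrbitalContraction Ξ Ω Δ η := ⟨hcycΩ, hcycΔ, hbdd, hcontr⟩
  have hlim := h.tendsto_norm_iterate_sub_iterate_add_two hη.1.le hη.2 hΩconv hΔconv hς₀
  have hdouble : Tendsto (fun n : ℕ => 2 * n) atTop atTop :=
    tendsto_id.const_mul_atTop' two_pos
  exact ⟨hlim.comp hdouble, hlim.comp ((tendsto_add_atTop_nat 1).comp hdouble)⟩

theorem stmt10 {X : Type*} [NormedAddCommGroup X] [NormedSpace ℝ X] [UniformConvexSpace X]
    [CompleteSpace X] (Ω Δ : Set X) (hΩ : Ω.Nonempty) (hΔ : Δ.Nonempty)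
    (hΩc : IsClosed Ω) (hΔc : IsClosed Δ) (hΩconv : Convex ℝ Ω) (hΔconv : Convex ℝ Δ)
    (Ξ : X → X) (η : ℝ) (hη : η ∈ Set.Ioo (0 : ℝ) 1)
    (hcycΩ : Set.MapsTo Ξ Ω Δ) (hcycΔ : Set.MapsTo Ξ Δ Ω)
    (hbdd : ∀ x : X, Bornology.IsBounded (Set.range fun n => Ξ^[n] x))
    (hcontr : ∀ ς ∈ Ω, ∀ ϑ ∈ Δ,
      ‖Ξ ς - Ξ ϑ‖ ≤ η * sSup { r : ℝ |
      (∃ i j : ℕ, Odd ((i : ℤ) - j) ∧ r = ‖Ξ^[i] ς - Ξ^[j] ς‖) ∨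
      (∃ k l : ℕ, Odd ((k : ℤ) - l) ∧ r = ‖Ξ^[k] ϑ - Ξ^[l] ϑ‖) ∨
      (∃ p q : ℕ, Even ((p : ℤ) - q) ∧ r = ‖Ξ^[p] ς - Ξ^[q] ϑ‖) }
        + (1 - η) * sInf (Set.image2 (fun x y => ‖x - y‖) Ω Δ))
    (ς₀ : X) (hς₀ : ς₀ ∈ Ω) :
    Tendsto (fun n => ‖Ξ^[2 * n] ς₀ - Ξ^[2 * n + 2] ς₀‖) atTop (nhds 0) ∧
      Tendsto (fun n => ‖Ξ^[2 * n + 1] ς₀ - Ξ^[2 * n + 3] ς₀‖) atTop (nhds 0) :=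
  stmt10_general Ω Δ hΩconv hΔconv Ξ η hη hcycΩ hcycΔ hbdd hcontr ς₀ hς₀
end

section
/- Let X be a uniformly convex Banach space, Ω, Δ nonempty, closed and convex subsets of X, and Ξ : X → X a cyclic orbital contraction on Ω ∪ Δ with constant η ∈ (0,1). Fix ς₀ ∈ Ω, define ς_{n+1} = Ξς_n for all n ≥ 0, and suppose ς* ∈ Ω is a limit of the sequence {ς_{2n}}. Then sup{‖Ξ^i ς* − Ξ^j ς*‖ : i, j ∈ ℕ ∪ {0}, i − j odd} = dist(Ω,Δ); in particular ‖ς* − Ξς*‖ = dist(Ω,Δ). -/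
open Filter Metric

theorem stmt11 {X : Type*} [NormedAddCommGroup X] [NormedSpace ℝ X] [UniformConvexSpace X]
    [CompleteSpace X] (Ω Δ : Set X) (hΩ : Ω.Nonempty) (hΔ : Δ.Nonempty)
    (hΩc : IsClosed Ω) (hΔc : IsClosed Δ) (hΩconv : Convex ℝ Ω) (hΔconv : Convex ℝ Δ)
    (Ξ : X → X) (η : ℝ) (hη : η ∈ Set.Ioo (0 : ℝ) 1)
    (hcycΩ : Set.MapsTo Ξ Ω Δ) (hcycΔ : Set.MapsTo Ξ Δ Ω)
    (hbdd : ∀ x : X, Bornology.IsBounded (Set.range fun n => Ξ^[n] x))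
    (hcontr : ∀ ς ∈ Ω, ∀ ϑ ∈ Δ,
      ‖Ξ ς - Ξ ϑ‖ ≤ η * sSup { r : ℝ |
      (∃ i j : ℕ, Odd ((i : ℤ) - j) ∧ r = ‖Ξ^[i] ς - Ξ^[j] ς‖) ∨
      (∃ k l : ℕ, Odd ((k : ℤ) - l) ∧ r = ‖Ξ^[k] ϑ - Ξ^[l] ϑ‖) ∨
      (∃ p q : ℕ, Even ((p : ℤ) - q) ∧ r = ‖Ξ^[p] ς - Ξ^[q] ϑ‖) }
        + (1 - η) * sInf (Set.image2 (fun x y => ‖x - y‖) Ω Δ))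
    (ς₀ : X) (hς₀ : ς₀ ∈ Ω) (ςs : X) (hςs : ςs ∈ Ω)
    (hlim : Tendsto (fun n => Ξ^[2 * n] ς₀) atTop (nhds ςs)) :
    sSup { r : ℝ | ∃ i j : ℕ, Odd ((i : ℤ) - j) ∧ r = ‖Ξ^[i] ςs - Ξ^[j] ςs‖ }
        = sInf (Set.image2 (fun x y => ‖x - y‖) Ω Δ) ∧
      ‖ςs - Ξ ςs‖ = sInf (Set.image2 (fun x y => ‖x - y‖) Ω Δ) := by
  obtain ⟨hη0, hη1⟩ := hη
  set d := sInf (Set.image2 (fun x y => ‖x - y‖) Ω Δ) with hd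
  have hd0 : 0 ≤ d := Real.sInf_nonneg (by rintro r ⟨u, hu, v, hv, rfl⟩; positivity)
  have hdle : ∀ u ∈ Ω, ∀ v ∈ Δ, d ≤ ‖u - v‖ := by
    intro u hu v hv
    exact csInf_le ⟨0, by rintro r ⟨a, _, b, _, rfl⟩; positivity⟩ ⟨u, hu, v, hv, rfl⟩
  -- orbit membership by parity
  have horb : ∀ x, x ∈ Ω → ∀ n : ℕ, (n % 2 = 0 → Ξ^[n] x ∈ Ω) ∧ (n % 2 = 1 → Ξ^[n] x ∈ Δ) := by
    intro x hx n
    induction n with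
    | zero => exact ⟨fun _ => hx, fun h => by omega⟩
    | succ n ih =>
      rw [Function.iterate_succ_apply']
      exact ⟨fun h => hcycΔ (ih.2 (by omega)), fun h => hcycΩ (ih.1 (by omega))⟩
  -- boundedness of orbits
  obtain ⟨R0, hR0⟩ := isBounded_iff_forall_norm_le.mp (hbdd ς₀)
  obtain ⟨R1, hR1⟩ := isBounded_iff_forall_norm_le.mp (hbdd ςs)
  have hR0' : ∀ n, ‖Ξ^[n] ς₀‖ ≤ R0 := fun n => hR0 _ ⟨n, rfl⟩
  have hR1' : ∀ n, ‖Ξ^[n] ςs‖ ≤ R1 := fun n => hR1 _ ⟨n, rfl⟩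
  -- the three families of sets
  set Bset := { r : ℝ | ∃ i j : ℕ, Odd ((i : ℤ) - j) ∧ r = ‖Ξ^[i] ςs - Ξ^[j] ςs‖ } with hBset
  set β := sSup Bset with hβ
  set rset : ℕ → Set ℝ := fun n =>
    { t : ℝ | ∃ i j : ℕ, n ≤ i ∧ n ≤ j ∧ Odd ((i : ℤ) - j) ∧ t = ‖Ξ^[i] ς₀ - Ξ^[j] ς₀‖ } with hrset
  set rr : ℕ → ℝ := fun n => sSup (rset n) with hrr
  set cset : ℕ → Set ℝ := fun m =>
    { t : ℝ | ∃ a b : ℕ, m ≤ b ∧ Odd ((a : ℤ) - b) ∧ t = ‖Ξ^[a] ςs - Ξ^[b] ς₀‖ } with hcset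
  set cc : ℕ → ℝ := fun m => sSup (cset m) with hcc
  have hBbdd : BddAbove Bset := by
    refine ⟨R1 + R1, ?_⟩
    rintro t ⟨i, j, _, rfl⟩
    exact (norm_sub_le _ _).trans (add_le_add (hR1' i) (hR1' j))
  have hrbdd : ∀ n, BddAbove (rset n) := by
    intro n
    refine ⟨R0 + R0, ?_⟩
    rintro t ⟨i, j, _, _, _, rfl⟩
    exact (norm_sub_le _ _).trans (add_le_add (hR0' i) (hR0' j))
  have hcbdd : ∀ m, BddAbove (cset m) := by
    intro m
    refine ⟨R1 + R0, ?_⟩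
    rintro t ⟨a, b, _, _, rfl⟩
    exact (norm_sub_le _ _).trans (add_le_add (hR1' a) (hR0' b))
  -- every element with odd index difference is ≥ d
  have hmixed : ∀ x, x ∈ Ω → ∀ y, y ∈ Ω → ∀ i j : ℕ, Odd ((i : ℤ) - j) →
      d ≤ ‖Ξ^[i] x - Ξ^[j] y‖ := by
    intro x hx y hy i j hodd
    rw [Int.odd_iff] at hodd
    rcases Nat.even_or_odd i with hi | hi
    · have hi' := Nat.even_iff.mp hi
      have hj : j % 2 = 1 := by omega
      exact hdle _ ((horb x hx i).1 hi') _ ((horb y hy j).2 hj)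
    · have hi' := Nat.odd_iff.mp hi
      have hj : j % 2 = 0 := by omega
      rw [norm_sub_rev]
      exact hdle _ ((horb y hy j).1 hj) _ ((horb x hx i).2 hi')
  have hdβ : d ≤ β :=
    le_trans (hmixed ςs hςs ςs hςs 1 0 (by rw [Int.odd_iff]; rfl))
      (le_csSup hBbdd ⟨1, 0, by rw [Int.odd_iff]; rfl, rfl⟩)
  have hβ0 : 0 ≤ β := hd0.trans hdβ
  have hdrr : ∀ n, d ≤ rr n := by
    intro n
    refine le_trans (hmixed ς₀ hς₀ ς₀ hς₀ (n + 1) n ?_)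
      (le_csSup (hrbdd n) ⟨n + 1, n, by omega, le_refl n, ?_, rfl⟩) <;>
    · rw [Int.odd_iff]; push_cast; omega
  have hdcc : ∀ m, d ≤ cc m := by
    intro m
    refine le_trans (hmixed ςs hςs ς₀ hς₀ (m + 1) m ?_)
      (le_csSup (hcbdd m) ⟨m + 1, m, le_refl m, ?_, rfl⟩) <;>
    · rw [Int.odd_iff]; push_cast; omega
  -- key consequence of the contraction
  have key : ∀ x, x ∈ Ω → ∀ y, y ∈ Δ → ∀ T : ℝ, 0 ≤ T →
      (∀ i j : ℕ, Odd ((i : ℤ) - j) → ‖Ξ^[i] x - Ξ^[j] x‖ ≤ T) →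
      (∀ k l : ℕ, Odd ((k : ℤ) - l) → ‖Ξ^[k] y - Ξ^[l] y‖ ≤ T) →
      (∀ p q : ℕ, Even ((p : ℤ) - q) → ‖Ξ^[p] x - Ξ^[q] y‖ ≤ T) →
      ‖Ξ x - Ξ y‖ ≤ η * T + (1 - η) * d := by
    intro x hx y hy T hT0 h1 h2 h3
    refine (hcontr x hx y hy).trans ?_
    have hS : sSup { r : ℝ |
        (∃ i j : ℕ, Odd ((i : ℤ) - j) ∧ r = ‖Ξ^[i] x - Ξ^[j] x‖) ∨
        (∃ k l : ℕ, Odd ((k : ℤ) - l) ∧ r = ‖Ξ^[k] y - Ξ^[l] y‖) ∨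
        (∃ p q : ℕ, Even ((p : ℤ) - q) ∧ r = ‖Ξ^[p] x - Ξ^[q] y‖) } ≤ T := by
      refine Real.sSup_le ?_ hT0
      rintro t (⟨i, j, h, rfl⟩ | ⟨k, l, h, rfl⟩ | ⟨p, q, h, rfl⟩)
      exacts [h1 i j h, h2 k l h, h3 p q h]
    have := mul_le_mul_of_nonneg_left hS (le_of_lt hη0)
    linarith
  -- generic step: bound for images of points ≥ 1 in the orbits of u, v ∈ Ω
  have step : ∀ u, u ∈ Ω → ∀ v, v ∈ Ω → ∀ i j : ℕ, 1 ≤ i → 1 ≤ j → Odd ((i : ℤ) - j) →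
      ∀ T : ℝ, 0 ≤ T →
      (∀ a b : ℕ, i - 1 ≤ a → i - 1 ≤ b → Odd ((a : ℤ) - b) → ‖Ξ^[a] u - Ξ^[b] u‖ ≤ T) →
      (∀ a b : ℕ, j - 1 ≤ a → j - 1 ≤ b → Odd ((a : ℤ) - b) → ‖Ξ^[a] v - Ξ^[b] v‖ ≤ T) →
      (∀ a b : ℕ, i - 1 ≤ a → j - 1 ≤ b → Odd ((a : ℤ) - b) → ‖Ξ^[a] u - Ξ^[b] v‖ ≤ T) →
      ‖Ξ^[i] u - Ξ^[j] v‖ ≤ η * T + (1 - η) * d := by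
    intro u hu v hv i j hi hj hodd T hT0 huu hvv huv
    obtain ⟨i', rfl⟩ : ∃ i', i = i' + 1 := ⟨i - 1, by omega⟩
    obtain ⟨j', rfl⟩ : ∃ j', j = j' + 1 := ⟨j - 1, by omega⟩
    rw [Int.odd_iff] at hodd
    simp only [Nat.add_sub_cancel] at huu hvv huv
    rw [Function.iterate_succ_apply', Function.iterate_succ_apply']
    rcases Nat.even_or_odd i' with hpar | hpar
    · have hi' := Nat.even_iff.mp hpar
      have hj' : j' % 2 = 1 := by omega
      refine key _ ((horb u hu i').1 hi') _ ((horb v hv j').2 hj') T hT0 ?_ ?_ ?_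
      · intro a b h
        rw [← Function.iterate_add_apply, ← Function.iterate_add_apply]
        refine huu (a + i') (b + i') (by omega) (by omega) ?_
        rw [Int.odd_iff] at h ⊢; push_cast at h ⊢; omega
      · intro a b h
        rw [← Function.iterate_add_apply, ← Function.iterate_add_apply]
        refine hvv (a + j') (b + j') (by omega) (by omega) ?_
        rw [Int.odd_iff] at h ⊢; push_cast at h ⊢; omega
      · intro p q h
        rw [← Function.iterate_add_apply, ← Function.iterate_add_apply]
        refine huv (p + i') (q + j') (by omega) (by omega) ?_
        rw [Int.even_iff] at h; rw [Int.odd_iff]; push_cast at h ⊢; omega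
    · have hi' := Nat.odd_iff.mp hpar
      have hj' : j' % 2 = 0 := by omega
      rw [norm_sub_rev]
      refine key _ ((horb v hv j').1 hj') _ ((horb u hu i').2 hi') T hT0 ?_ ?_ ?_
      · intro a b h
        rw [← Function.iterate_add_apply, ← Function.iterate_add_apply]
        refine hvv (a + j') (b + j') (by omega) (by omega) ?_
        rw [Int.odd_iff] at h ⊢; push_cast at h ⊢; omega
      · intro a b h
        rw [← Function.iterate_add_apply, ← Function.iterate_add_apply]
        refine huu (a + i') (b + i') (by omega) (by omega) ?_
        rw [Int.odd_iff] at h ⊢; push_cast at h ⊢; omega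
      · intro p q h
        rw [← Function.iterate_add_apply, ← Function.iterate_add_apply, norm_sub_rev]
        refine huv (q + i') (p + j') (by omega) (by omega) ?_
        rw [Int.even_iff] at h; rw [Int.odd_iff]; push_cast at h ⊢; omega
  -- recursion for rr
  have hrrec : ∀ n, rr (n + 1) ≤ η * rr n + (1 - η) * d := by
    intro n
    refine Real.sSup_le ?_ (by nlinarith [hdrr n, hd0])
    rintro t ⟨i, j, hi, hj, hodd, rfl⟩
    refine step ς₀ hς₀ ς₀ hς₀ i j (by omega) (by omega) hodd (rr n) (hd0.trans (hdrr n))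
      ?_ ?_ ?_ <;>
    · intro a b ha hb h
      exact le_csSup (hrbdd n) ⟨a, b, by omega, by omega, h, rfl⟩
  have hrmono : ∀ m n, m ≤ n → rr n ≤ rr m := by
    intro m n hmn
    refine Real.sSup_le ?_ (hd0.trans (hdrr m))
    rintro t ⟨i, j, hi, hj, h, rfl⟩
    exact le_csSup (hrbdd m) ⟨i, j, by omega, by omega, h, rfl⟩
  have hrdecay : ∀ n, rr n ≤ d + η ^ n * (rr 0 - d) := by
    intro n
    induction n with
    | zero => simp
    | succ n ih =>
      have h1 := hrrec n
      have h2 : η * rr n ≤ η * (d + η ^ n * (rr 0 - d)) := by nlinarith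
      have h3 : η * (d + η ^ n * (rr 0 - d)) + (1 - η) * d = d + η ^ (n + 1) * (rr 0 - d) := by
        ring
      linarith
  have hrsmall : ∀ ε > (0 : ℝ), ∃ M, rr M ≤ d + ε := by
    intro ε hε
    rcases le_or_gt (rr 0 - d) 0 with h | h
    · exact ⟨0, by nlinarith [hrdecay 0]⟩
    · obtain ⟨M, hM⟩ := exists_pow_lt_of_lt_one (div_pos hε h) hη1
      refine ⟨M, ?_⟩
      have h2 : η ^ M * (rr 0 - d) ≤ ε / (rr 0 - d) * (rr 0 - d) :=
        mul_le_mul_of_nonneg_right hM.le h.le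
      rw [div_mul_cancel₀ _ (ne_of_gt h)] at h2
      linarith [hrdecay M]
  -- elements of B with both indices ≥ 1
  have hBstep : ∀ i j : ℕ, 1 ≤ i → 1 ≤ j → Odd ((i : ℤ) - j) →
      ‖Ξ^[i] ςs - Ξ^[j] ςs‖ ≤ η * β + (1 - η) * d := by
    intro i j hi hj h
    refine step ςs hςs ςs hςs i j hi hj h β hβ0 ?_ ?_ ?_ <;>
    · intro a b _ _ hab
      exact le_csSup hBbdd ⟨a, b, hab, rfl⟩
  -- recursion for cc
  have hcrec : ∀ m, cc (m + 1) ≤ max (η * max β (max (cc m) (rr m)) + (1 - η) * d)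
      (rr (m + 1)) := by
    intro m
    have hT0 : (0 : ℝ) ≤ max β (max (cc m) (rr m)) := hβ0.trans (le_max_left _ _)
    refine Real.sSup_le ?_ (le_trans (hd0.trans (hdrr (m + 1))) (le_max_right _ _))
    rintro t ⟨a, b, hb, hodd, rfl⟩
    rcases Nat.eq_zero_or_pos a with rfl | ha
    · refine le_trans ?_ (le_max_right _ _)
      have hodd' := Int.odd_iff.mp hodd
      have hlim2 : Tendsto (fun n => ‖Ξ^[2 * n] ς₀ - Ξ^[b] ς₀‖) atTop
          (nhds ‖ςs - Ξ^[b] ς₀‖) := (hlim.sub tendsto_const_nhds).norm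
      simp only [Function.iterate_zero_apply]
      refine le_of_tendsto hlim2 ?_
      filter_upwards [eventually_ge_atTop (m + 1)] with n hn
      refine le_csSup (hrbdd (m + 1)) ⟨2 * n, b, by omega, hb, ?_, rfl⟩
      rw [Int.odd_iff]; push_cast at hodd' ⊢; omega
    · refine le_trans ?_ (le_max_left _ _)
      refine step ςs hςs ς₀ hς₀ a b ha (by omega) hodd _ hT0 ?_ ?_ ?_
      · intro p q _ _ h
        exact le_trans (le_csSup hBbdd ⟨p, q, h, rfl⟩) (le_max_left _ _)
      · intro p q hp hq h
        exact le_trans (le_csSup (hrbdd m) ⟨p, q, by omega, by omega, h, rfl⟩)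
          (le_trans (le_max_right _ _) (le_max_right _ _))
      · intro p q hp hq h
        exact le_trans (le_csSup (hcbdd m) ⟨p, q, by omega, h, rfl⟩)
          (le_trans (le_max_left _ _) (le_max_right _ _))
  -- cc is eventually close to ηβ + (1-η)d
  have hcdecay : ∀ ε > (0 : ℝ), ∃ m, cc m ≤ η * β + (1 - η) * d + ε := by
    intro ε hε
    obtain ⟨M, hM⟩ := hrsmall ε hε
    set G := η * β + (1 - η) * d + ε with hG
    have hdG : d + ε ≤ G := by nlinarith [hdβ]
    have hdG' : d ≤ G := by linarith
    have hrM : ∀ m, M ≤ m → rr m ≤ d + ε := fun m hm => (hrmono M m hm).trans hM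
    have hind : ∀ k, cc (M + k) ≤ max G (d + η ^ k * (cc M - d)) := by
      intro k
      induction k with
      | zero =>
        have : cc M ≤ d + 1 * (cc M - d) := by linarith [hdcc M]
        simpa using le_max_of_le_right this
      | succ k ih =>
        have h1 := hcrec (M + k)
        have h2 : rr (M + k + 1) ≤ G := (hrM _ (by omega)).trans hdG
        have h3 : rr (M + k) ≤ G := (hrM _ (by omega)).trans hdG
        have hkey : η * max β (max (cc (M + k)) (rr (M + k))) + (1 - η) * d ≤
            max G (d + η ^ (k + 1) * (cc M - d)) := by
          have hβG : η * max β G + (1 - η) * d ≤ G := by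
            rcases le_total β G with h | h
            · rw [max_eq_right h]; nlinarith
            · rw [max_eq_left h]; linarith
          rcases le_or_gt (cc (M + k)) (max β G) with h | h
          · have ht : max β (max (cc (M + k)) (rr (M + k))) ≤ max β G :=
              max_le (le_max_left _ _) (max_le h (h3.trans (le_max_right _ _)))
            refine le_trans ?_ (le_max_left _ _)
            refine le_trans ?_ hβG
            nlinarith
          · have hc2 : cc (M + k) ≤ d + η ^ k * (cc M - d) := by
              rcases max_cases G (d + η ^ k * (cc M - d)) with ⟨he, _⟩ | ⟨he, _⟩
              · exfalso
                rw [he] at ih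
                have : G ≤ max β G := le_max_right _ _
                linarith
              · rw [he] at ih; exact ih
            have ht : max β (max (cc (M + k)) (rr (M + k))) ≤ d + η ^ k * (cc M - d) := by
              have hβ2 : β ≤ max β G := le_max_left _ _
              refine max_le (le_trans hβ2 (h.le.trans hc2)) (max_le hc2 ?_)
              exact le_trans h3 (le_trans (le_max_right β G) (h.le.trans hc2))
            refine le_trans ?_ (le_max_right _ _)
            have heq : η * (d + η ^ k * (cc M - d)) + (1 - η) * d =
                d + η ^ (k + 1) * (cc M - d) := by ring
            nlinarith
        exact h1.trans (max_le hkey (le_trans (h2.trans (le_max_left _ _)) le_rfl))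
    rcases le_or_gt (cc M - d) 0 with h | h
    · refine ⟨M, ?_⟩
      have := hind 0
      simp only [pow_zero] at this
      have h2 : d + 1 * (cc M - d) ≤ G := by linarith
      exact le_trans this (max_le le_rfl h2)
    · obtain ⟨k, hk⟩ := exists_pow_lt_of_lt_one (div_pos hε h) hη1
      refine ⟨M + k, ?_⟩
      have h2 : η ^ k * (cc M - d) ≤ ε / (cc M - d) * (cc M - d) :=
        mul_le_mul_of_nonneg_right hk.le h.le
      rw [div_mul_cancel₀ _ (ne_of_gt h)] at h2
      have h3 : d + η ^ k * (cc M - d) ≤ G := by linarith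
      exact le_trans (hind k) (max_le le_rfl h3)
  -- β satisfies the contraction inequality
  have hβle : β ≤ η * β + (1 - η) * d := by
    have hstep : ∀ ε > (0 : ℝ), β ≤ η * β + (1 - η) * d + 2 * ε := by
      intro ε hε
      obtain ⟨m, hm⟩ := hcdecay ε hε
      obtain ⟨N, hN⟩ := Metric.tendsto_atTop.mp hlim ε hε
      set n := max N m with hn
      have hnm : m ≤ n := le_max_right N m
      have h1 : ‖ςs - Ξ^[2 * n] ς₀‖ ≤ ε := by
        have := hN n (le_max_left _ _)
        rw [dist_eq_norm] at this
        rw [norm_sub_rev]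
        linarith
      have hzero : ∀ j : ℕ, Odd ((0 : ℤ) - (j : ℤ)) →
          ‖ςs - Ξ^[j] ςs‖ ≤ η * β + (1 - η) * d + 2 * ε := by
        intro j hj
        rw [Int.odd_iff] at hj
        have h2 : ‖Ξ^[j] ςs - Ξ^[2 * n] ς₀‖ ≤ cc m := by
          refine le_csSup (hcbdd m) ⟨j, 2 * n, by omega, ?_, rfl⟩
          rw [Int.odd_iff]; push_cast at hj ⊢; omega
        have tri : ‖ςs - Ξ^[j] ςs‖ ≤ ‖ςs - Ξ^[2 * n] ς₀‖ + ‖Ξ^[2 * n] ς₀ - Ξ^[j] ςs‖ := by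
          have := dist_triangle ςs (Ξ^[2 * n] ς₀) (Ξ^[j] ςs)
          simpa [dist_eq_norm] using this
        have hrev : ‖Ξ^[2 * n] ς₀ - Ξ^[j] ςs‖ = ‖Ξ^[j] ςs - Ξ^[2 * n] ς₀‖ :=
          norm_sub_rev _ _
        linarith [h2.trans hm]
      refine Real.sSup_le ?_ (by nlinarith)
      rintro t ⟨i, j, hodd, rfl⟩
      rcases Nat.eq_zero_or_pos i with rfl | hi
      · have := hzero j (by exact_mod_cast hodd)
        simpa using this
      rcases Nat.eq_zero_or_pos j with rfl | hj
      · rw [norm_sub_rev]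
        have hodd' : Odd ((0 : ℤ) - (i : ℤ)) := by
          rw [Int.odd_iff] at hodd ⊢; push_cast at hodd ⊢; omega
        have := hzero i hodd'
        simpa using this
      · have := hBstep i j hi hj hodd
        linarith
    by_contra hcon
    push_neg at hcon
    obtain ⟨ε, hε, hlt⟩ : ∃ ε > (0 : ℝ), η * β + (1 - η) * d + 2 * ε < β :=
      ⟨(β - (η * β + (1 - η) * d)) / 4, by linarith, by linarith⟩
    linarith [hstep ε hε]
  have hβd : β = d := by
    have : (1 - η) * β ≤ (1 - η) * d := by nlinarith
    have hle : β ≤ d := by nlinarith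
    exact le_antisymm hle hdβ
  constructor
  · exact hβd
  · refine le_antisymm ?_ (hdle ςs hςs (Ξ ςs) (hcycΩ hςs))
    have hmem : ‖ςs - Ξ ςs‖ ∈ Bset :=
      ⟨0, 1, by rw [Int.odd_iff]; rfl, by simp⟩
    exact le_trans (le_csSup hBbdd hmem) (le_of_eq hβd)
end

section
/- Let X be a uniformly convex Banach space and let Ω, Δ be nonempty, closed subsets of X with Ω convex. Let {ς_r} and {ϱ_r} be sequences in Ω and {ϑ_r} a sequence in Δ such that: (i) for each ε > 0 there exists M₀ such that ‖ς_s − ϑ_r‖ ≤ dist(Ω,Δ) + ε for all s > r ≥ M₀, and (ii) ‖ϱ_r − ϑ_r‖ → dist(Ω,Δ). Then for each ε > 0 there exists M₁ such that ‖ς_s − ϱ_r‖ ≤ ε for all s > r ≥ M₁. -/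
open Filter Metric

theorem stmt12 {X : Type*} [NormedAddCommGroup X] [NormedSpace ℝ X] [UniformConvexSpace X]
    [CompleteSpace X] (Ω Δ : Set X) (hΩ : Ω.Nonempty) (hΔ : Δ.Nonempty)
    (hΩc : IsClosed Ω) (hΔc : IsClosed Δ) (hΩconv : Convex ℝ Ω)
    (ς ϱ : ℕ → X) (ϑ : ℕ → X)
    (hς : ∀ r, ς r ∈ Ω) (hϱ : ∀ r, ϱ r ∈ Ω) (hϑ : ∀ r, ϑ r ∈ Δ)
    (h1 : ∀ ε > (0 : ℝ), ∃ M₀ : ℕ, ∀ s r : ℕ, r < s → M₀ ≤ r →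
      ‖ς s - ϑ r‖ ≤ sInf (Set.image2 (fun x y => ‖x - y‖) Ω Δ) + ε)
    (h2 : Tendsto (fun r => ‖ϱ r - ϑ r‖) atTop (nhds (sInf (Set.image2 (fun x y => ‖x - y‖) Ω Δ)))) :
    ∀ ε > (0 : ℝ), ∃ M₁ : ℕ, ∀ s r : ℕ, r < s → M₁ ≤ r → ‖ς s - ϱ r‖ ≤ ε := by
  set d := sInf (Set.image2 (fun x y => ‖x - y‖) Ω Δ) with hd
  have hSne : (Set.image2 (fun (x y : X) => ‖x - y‖) Ω Δ).Nonempty := hΩ.image2 hΔ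
  have hbdd : BddBelow (Set.image2 (fun (x y : X) => ‖x - y‖) Ω Δ) := by
    refine ⟨0, fun z hz => ?_⟩
    obtain ⟨x, hx, y, hy, rfl⟩ := hz
    positivity
  have hd0 : 0 ≤ d := le_csInf hSne (by rintro z ⟨x, hx, y, hy, rfl⟩; positivity)
  have hdle : ∀ x ∈ Ω, ∀ y ∈ Δ, d ≤ ‖x - y‖ := fun x hx y hy =>
    csInf_le hbdd (Set.mem_image2_of_mem hx hy)
  intro ε hε
  -- key: for any η > 0 obtain a bound on ‖ϱ r - ϑ r‖ eventually
  have hev : ∀ η > (0 : ℝ), ∃ N : ℕ, ∀ r, N ≤ r → ‖ϱ r - ϑ r‖ ≤ d + η := by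
    intro η hη
    have : ∀ᶠ r in atTop, ‖ϱ r - ϑ r‖ < d + η :=
      h2.eventually (eventually_lt_nhds (by linarith))
    obtain ⟨N, hN⟩ := eventually_atTop.mp this
    exact ⟨N, fun r hr => (hN r hr).le⟩
  rcases eq_or_lt_of_le hd0 with hd0' | hdpos
  · -- case d = 0
    obtain ⟨M₀, hM₀⟩ := h1 (ε / 2) (by positivity)
    obtain ⟨N, hN⟩ := hev (ε / 2) (by positivity)
    refine ⟨max M₀ N, fun s r hrs hr => ?_⟩
    have h1' := hM₀ s r hrs (le_trans (le_max_left _ _) hr)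
    have h2' := hN r (le_trans (le_max_right _ _) hr)
    calc ‖ς s - ϱ r‖ ≤ ‖ς s - ϑ r‖ + ‖ϑ r - ϱ r‖ := norm_sub_le_norm_sub_add_norm_sub _ _ _
      _ ≤ (d + ε / 2) + ‖ϱ r - ϑ r‖ := by rw [norm_sub_rev (ϑ r)]; linarith
      _ ≤ ε := by linarith [hd0']
  · -- case d > 0
    obtain ⟨δ, hδ, hδ'⟩ := exists_forall_closed_ball_dist_add_le_two_sub X
      (div_pos hε (by linarith : (0:ℝ) < d + 1))
    set η := min 1 (δ * d / 4) with hη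
    have hηpos : 0 < η := lt_min one_pos (by positivity)
    have hη1 : η ≤ 1 := min_le_left _ _
    have hη2 : η ≤ δ * d / 4 := min_le_right _ _
    obtain ⟨M₀, hM₀⟩ := h1 η hηpos
    obtain ⟨N, hN⟩ := hev η hηpos
    refine ⟨max M₀ N, fun s r hrs hr => ?_⟩
    by_contra hcon
    push_neg at hcon
    set a := ς s - ϑ r with ha
    set b := ϱ r - ϑ r with hb
    have haR : ‖a‖ ≤ d + η := hM₀ s r hrs (le_trans (le_max_left _ _) hr)
    have hbR : ‖b‖ ≤ d + η := hN r (le_trans (le_max_right _ _) hr)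
    have hRpos : (0:ℝ) < d + η := by linarith
    -- midpoint is in Ω
    have hmid : (2:ℝ)⁻¹ • ς s + (2:ℝ)⁻¹ • ϱ r ∈ Ω :=
      hΩconv (hς s) (hϱ r) (by norm_num) (by norm_num) (by norm_num)
    have hab : 2 * d ≤ ‖a + b‖ := by
      have h := hdle _ hmid _ (hϑ r)
      have heq : ((2:ℝ)⁻¹ • ς s + (2:ℝ)⁻¹ • ϱ r) - ϑ r = (2:ℝ)⁻¹ • (a + b) := by
        rw [ha, hb, smul_add, smul_sub, smul_sub]
        module
      rw [heq, norm_smul] at h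
      simp only [norm_inv, Real.norm_ofNat] at h
      linarith
    -- apply uniform convexity to the rescaled vectors
    have hx : ‖(d + η)⁻¹ • a‖ ≤ 1 := by
      rw [norm_smul, norm_inv, Real.norm_of_nonneg hRpos.le]
      rw [inv_mul_le_iff₀ hRpos]; simpa using haR
    have hy : ‖(d + η)⁻¹ • b‖ ≤ 1 := by
      rw [norm_smul, norm_inv, Real.norm_of_nonneg hRpos.le]
      rw [inv_mul_le_iff₀ hRpos]; simpa using hbR
    have hxy : ε / (d + 1) ≤ ‖(d + η)⁻¹ • a - (d + η)⁻¹ • b‖ := by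
      rw [← smul_sub, norm_smul, norm_inv, Real.norm_of_nonneg hRpos.le]
      have hablow : ε < ‖a - b‖ := by
        have : a - b = ς s - ϱ r := by rw [ha, hb]; abel
        rw [this]; exact hcon
      rw [inv_mul_eq_div, div_le_div_iff₀ (by linarith) hRpos]
      nlinarith [norm_nonneg (a - b)]
    have hkey := hδ' hx hy hxy
    rw [← smul_add, norm_smul, norm_inv, Real.norm_of_nonneg hRpos.le,
      inv_mul_le_iff₀ hRpos] at hkey
    nlinarith
end

section
/- Let X be a uniformly convex Banach space and let Ω, Δ be nonempty, closed subsets of X with Ω convex. Let {ς_r} and {ϱ_r} be sequences in Ω and {ϑ_r} a sequence in Δ such that ‖ς_r − ϑ_r‖ → dist(Ω,Δ) and ‖ϱ_r − ϑ_r‖ → dist(Ω,Δ). Then ‖ς_r − ϱ_r‖ → 0. -/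
open Filter Metric

theorem stmt13 {X : Type*} [NormedAddCommGroup X] [NormedSpace ℝ X] [UniformConvexSpace X]
    [CompleteSpace X] (Ω Δ : Set X) (hΩ : Ω.Nonempty) (hΔ : Δ.Nonempty)
    (hΩc : IsClosed Ω) (hΔc : IsClosed Δ) (hΩconv : Convex ℝ Ω)
    (ς ϱ : ℕ → X) (ϑ : ℕ → X)
    (hς : ∀ r, ς r ∈ Ω) (hϱ : ∀ r, ϱ r ∈ Ω) (hϑ : ∀ r, ϑ r ∈ Δ)
    (h1 : Tendsto (fun r => ‖ς r - ϑ r‖) atTop (nhds (sInf (Set.image2 (fun x y => ‖x - y‖) Ω Δ))))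
    (h2 : Tendsto (fun r => ‖ϱ r - ϑ r‖) atTop (nhds (sInf (Set.image2 (fun x y => ‖x - y‖) Ω Δ)))) :
    Tendsto (fun r => ‖ς r - ϱ r‖) atTop (nhds 0) := by
  set d := sInf (Set.image2 (fun x y => ‖x - y‖) Ω Δ) with hd
  have hbdd : BddBelow (Set.image2 (fun x y => ‖x - y‖) Ω Δ) :=
    ⟨0, by rintro _ ⟨a, ha, b, hb, rfl⟩; positivity⟩
  have hdle : ∀ a ∈ Ω, ∀ b ∈ Δ, d ≤ ‖a - b‖ := fun a ha b hb =>
    csInf_le hbdd ⟨a, ha, b, hb, rfl⟩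
  have hd0 : 0 ≤ d :=
    le_csInf (hΩ.image2 hΔ) (by rintro _ ⟨a, _, b, _, rfl⟩; positivity)
  rcases hd0.eq_or_lt with h0 | hdpos
  · -- case d = 0
    have h1' : Tendsto (fun r => ‖ς r - ϑ r‖) atTop (nhds 0) := by rw [← h0] at h1; exact h1
    have h2' : Tendsto (fun r => ‖ϱ r - ϑ r‖) atTop (nhds 0) := by rw [← h0] at h2; exact h2
    have hsum := h1'.add h2'
    rw [add_zero] at hsum
    refine squeeze_zero (fun r => norm_nonneg _) (fun r => ?_) hsum
    calc ‖ς r - ϱ r‖ = ‖(ς r - ϑ r) - (ϱ r - ϑ r)‖ := by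
          congr 1; abel
      _ ≤ ‖ς r - ϑ r‖ + ‖ϱ r - ϑ r‖ := norm_sub_le _ _
  · -- case d > 0
    rw [Metric.tendsto_nhds]
    intro ε hε
    have hd1 : (0:ℝ) < d + 1 := by linarith
    obtain ⟨δ, hδ, hδball⟩ :=
      exists_forall_closed_ball_dist_add_le_two_sub X (div_pos hε hd1)
    set δ' := min δ 1 with hδ'def
    have hδ'0 : 0 < δ' := lt_min hδ one_pos
    have hδ'1 : δ' ≤ 1 := min_le_right _ _
    set η := min (δ' * d / 4) 1 with hηdef
    have hη0 : 0 < η := lt_min (by positivity) one_pos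
    have hη1 : η ≤ 1 := min_le_right _ _
    have hη2 : η ≤ δ' * d / 4 := min_le_left _ _
    set D := d + η with hDdef
    have hD : 0 < D := by positivity
    have hE1 : ∀ᶠ r in atTop, ‖ς r - ϑ r‖ < D :=
      h1.eventually (gt_mem_nhds (by simp only [hDdef]; linarith))
    have hE2 : ∀ᶠ r in atTop, ‖ϱ r - ϑ r‖ < D :=
      h2.eventually (gt_mem_nhds (by simp only [hDdef]; linarith))
    filter_upwards [hE1, hE2] with r h1r h2r
    rw [Real.dist_0_eq_abs, abs_of_nonneg (norm_nonneg _)]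
    by_contra hcon
    push_neg at hcon
    set x := D⁻¹ • (ς r - ϑ r) with hxdef
    set y := D⁻¹ • (ϱ r - ϑ r) with hydef
    have hDne : D ≠ 0 := hD.ne'
    have hxn : ‖x‖ ≤ 1 := by
      rw [hxdef, norm_smul, norm_inv, Real.norm_of_nonneg hD.le]
      rw [inv_mul_le_iff₀ hD, mul_one]
      exact h1r.le
    have hyn : ‖y‖ ≤ 1 := by
      rw [hydef, norm_smul, norm_inv, Real.norm_of_nonneg hD.le]
      rw [inv_mul_le_iff₀ hD, mul_one]
      exact h2r.le
    have hxy : ε / (d + 1) ≤ ‖x - y‖ := by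
      have hsub : x - y = D⁻¹ • (ς r - ϱ r) := by
        rw [hxdef, hydef, ← smul_sub]; congr 1; abel
      rw [hsub, norm_smul, norm_inv, Real.norm_of_nonneg hD.le]
      have hDle : D ≤ d + 1 := by simp only [hDdef]; linarith
      calc ε / (d + 1) = (d + 1)⁻¹ * ε := by ring
        _ ≤ D⁻¹ * ‖ς r - ϱ r‖ :=
          mul_le_mul (inv_anti₀ hD hDle) hcon hε.le (inv_nonneg.2 hD.le)
    have hkey : ‖x + y‖ ≤ 2 - δ := hδball hxn hyn hxy
    -- midpoint
    have hm : (1/2 : ℝ) • ς r + (1/2 : ℝ) • ϱ r ∈ Ω :=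
      hΩconv (hς r) (hϱ r) (by norm_num) (by norm_num) (by norm_num)
    have hdm : d ≤ ‖((1/2 : ℝ) • ς r + (1/2 : ℝ) • ϱ r) - ϑ r‖ :=
      hdle _ hm (ϑ r) (hϑ r)
    have hsum : x + y = (2 * D⁻¹) • (((1/2 : ℝ) • ς r + (1/2 : ℝ) • ϱ r) - ϑ r) := by
      rw [hxdef, hydef]; module
    have hnormsum : ‖x + y‖ = 2 * D⁻¹ * ‖((1/2 : ℝ) • ς r + (1/2 : ℝ) • ϱ r) - ϑ r‖ := by
      rw [hsum, norm_smul, Real.norm_of_nonneg (by positivity)]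
    have hlow : 2 * D⁻¹ * d ≤ ‖x + y‖ := by
      rw [hnormsum]
      exact mul_le_mul_of_nonneg_left hdm (by positivity)
    have hfin : 2 * D⁻¹ * d ≤ 2 - δ' := by
      have : 2 - δ ≤ 2 - δ' := by simp only [hδ'def]; have := min_le_left δ 1; linarith
      linarith [hlow.trans hkey]
    have hDinv : D⁻¹ * D = 1 := inv_mul_cancel₀ hDne
    have h2d : 2 * d ≤ (2 - δ') * D := by
      have := mul_le_mul_of_nonneg_right hfin hD.le
      calc 2 * d = 2 * D⁻¹ * d * D := by field_simp
        _ ≤ (2 - δ') * D := this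
    nlinarith [mul_pos hδ'0 hη0, mul_pos hδ'0 hdpos]
end

section
/- Let X be a uniformly convex Banach space and let Ω, Δ be nonempty, closed and convex subsets of X. Let Ξ : X → X be a cyclic contraction on Ω ∪ Δ: Ξ(Ω) ⊆ Δ, Ξ(Δ) ⊆ Ω, and there exists η ∈ (0,1) such that ‖Ξς − Ξϑ‖ ≤ η‖ς − ϑ‖ + (1 − η)·dist(Ω,Δ) for all ς ∈ Ω, ϑ ∈ Δ. Then Ξ has a unique best proximity point in Ω, i.e., there exists exactly one ϱ ∈ Ω with ‖ϱ − Ξϱ‖ = dist(Ω,Δ). -/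
open Filter Metric Topology

lemma aux_key {X : Type*} [NormedAddCommGroup X] [NormedSpace ℝ X] [UniformConvexSpace X]
    (Ω Δ : Set X) (hΩconv : Convex ℝ Ω)
    (d : ℝ) (hd0 : 0 ≤ d) (hdle : ∀ x ∈ Ω, ∀ y ∈ Δ, d ≤ ‖x - y‖)
    {ε : ℝ} (hε : 0 < ε) :
    ∃ δ > 0, ∀ x ∈ Ω, ∀ y ∈ Ω, ∀ z ∈ Δ,
      ‖x - z‖ ≤ d + δ → ‖y - z‖ ≤ d + δ → ‖x - y‖ ≤ ε := by
  rcases lt_or_ge (2 * d) ε with h2d | h2d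
  · refine ⟨(ε - 2 * d) / 2, by linarith, fun x hx y hy z hz h1 h2 => ?_⟩
    calc ‖x - y‖ ≤ ‖x - z‖ + ‖z - y‖ := norm_sub_le_norm_sub_add_norm_sub x z y
      _ = ‖x - z‖ + ‖y - z‖ := by rw [norm_sub_rev z y]
      _ ≤ ε := by linarith
  · have hdpos : 0 < d := by linarith
    obtain ⟨δ₁, hδ₁0, hδ₁⟩ := exists_forall_closed_ball_dist_add_le_two_sub X
      (show (0:ℝ) < ε / (d + 1) by positivity)
    refine ⟨min 1 (d * δ₁ / 4), lt_min one_pos (by positivity), fun x hx y hy z hz h1 h2 => ?_⟩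
    by_contra hcon
    push_neg at hcon
    set δ' := min 1 (d * δ₁ / 4) with hδ'def
    have hδ'1 : δ' ≤ 1 := min_le_left _ _
    have hδ'2 : δ' ≤ d * δ₁ / 4 := min_le_right _ _
    have hδ'0 : 0 < δ' := lt_min one_pos (by positivity)
    set r := d + δ' with hrdef
    have hr : 0 < r := by positivity
    have hu : ‖r⁻¹ • (x - z)‖ ≤ 1 := by
      rw [norm_smul, norm_inv, Real.norm_of_nonneg hr.le, inv_mul_le_one₀ hr]
      exact h1
    have hv : ‖r⁻¹ • (y - z)‖ ≤ 1 := by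
      rw [norm_smul, norm_inv, Real.norm_of_nonneg hr.le, inv_mul_le_one₀ hr]
      exact h2
    have huv : ε / (d + 1) ≤ ‖r⁻¹ • (x - z) - r⁻¹ • (y - z)‖ := by
      rw [← smul_sub, norm_smul, norm_inv, Real.norm_of_nonneg hr.le]
      have hxy : x - z - (y - z) = x - y := by abel
      rw [hxy]
      calc ε / (d + 1) ≤ ε / r := by
            gcongr
            linarith
        _ ≤ ‖x - y‖ / r := by
            gcongr
        _ = r⁻¹ * ‖x - y‖ := div_eq_inv_mul _ _
    have hsum := hδ₁ hu hv huv
    have hmid : (1/2 : ℝ) • x + (1/2 : ℝ) • y ∈ Ω :=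
      hΩconv hx hy (by norm_num) (by norm_num) (by norm_num)
    have hmd : d ≤ ‖(1/2 : ℝ) • x + (1/2 : ℝ) • y - z‖ := hdle _ hmid _ hz
    have hsum2 : ‖(x - z) + (y - z)‖ = 2 * ‖(1/2 : ℝ) • x + (1/2 : ℝ) • y - z‖ := by
      have : (x - z) + (y - z) = (2:ℝ) • ((1/2 : ℝ) • x + (1/2 : ℝ) • y - z) := by
        module
      rw [this, norm_smul]
      norm_num
    have hsum3 : ‖(x - z) + (y - z)‖ = r * ‖r⁻¹ • (x - z) + r⁻¹ • (y - z)‖ := by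
      rw [← smul_add, norm_smul, norm_inv, Real.norm_of_nonneg hr.le]
      field_simp
    have hnn : 0 ≤ ‖r⁻¹ • (x - z) + r⁻¹ • (y - z)‖ := norm_nonneg _
    nlinarith [hsum, hmd, hsum2, hsum3]

set_option maxHeartbeats 1600000

theorem stmt14 {X : Type*} [NormedAddCommGroup X] [NormedSpace ℝ X] [UniformConvexSpace X]
    [CompleteSpace X] (Ω Δ : Set X) (hΩ : Ω.Nonempty) (hΔ : Δ.Nonempty)
    (hΩc : IsClosed Ω) (hΔc : IsClosed Δ) (hΩconv : Convex ℝ Ω) (hΔconv : Convex ℝ Δ)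
    (Ξ : X → X) (hcycΩ : Set.MapsTo Ξ Ω Δ) (hcycΔ : Set.MapsTo Ξ Δ Ω)
    (η : ℝ) (hη : η ∈ Set.Ioo (0 : ℝ) 1)
    (hcontr : ∀ ς ∈ Ω, ∀ ϑ ∈ Δ,
      ‖Ξ ς - Ξ ϑ‖ ≤ η * ‖ς - ϑ‖ + (1 - η) * sInf (Set.image2 (fun x y => ‖x - y‖) Ω Δ)) :
    ∃! ϱ : X, ϱ ∈ Ω ∧ ‖ϱ - Ξ ϱ‖ = sInf (Set.image2 (fun x y => ‖x - y‖) Ω Δ) := by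
  obtain ⟨hη0, hη1⟩ := hη
  set d := sInf (Set.image2 (fun x y => ‖x - y‖) Ω Δ) with hddef
  have hbdd : BddBelow (Set.image2 (fun x y => ‖x - y‖) Ω Δ) :=
    ⟨0, by rintro r ⟨x, _, y, _, rfl⟩; exact norm_nonneg _⟩
  have hdle : ∀ x ∈ Ω, ∀ y ∈ Δ, d ≤ ‖x - y‖ := fun x hx y hy =>
    csInf_le hbdd ⟨x, hx, y, hy, rfl⟩
  have hd0 : 0 ≤ d :=
    le_csInf (hΩ.image2 hΔ) (by rintro r ⟨x, _, y, _, rfl⟩; exact norm_nonneg _)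
  have hc : ∀ ς ∈ Ω, ∀ ϑ ∈ Δ, ‖Ξ ς - Ξ ϑ‖ ≤ η * ‖ς - ϑ‖ + (1 - η) * d := hcontr
  obtain ⟨x₀, hx₀⟩ := hΩ
  set seq : ℕ → X := fun n => Ξ^[n] x₀ with hseqdef
  have hseq : ∀ n, seq (n + 1) = Ξ (seq n) := fun n => Function.iterate_succ_apply' Ξ n x₀
  have hseq0 : seq 0 = x₀ := rfl
  clear_value seq
  have hmem : ∀ n : ℕ, seq (2 * n) ∈ Ω ∧ seq (2 * n + 1) ∈ Δ := by
    intro n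
    induction n with
    | zero =>
      constructor
      · show seq 0 ∈ Ω; rw [hseq0]; exact hx₀
      · show seq (0 + 1) ∈ Δ; rw [hseq, hseq0]; exact hcycΩ hx₀
    | succ n ih =>
      have e1 : 2 * (n + 1) = (2 * n + 1) + 1 := by ring
      have h1 : seq (2 * (n + 1)) ∈ Ω := by rw [e1, hseq]; exact hcycΔ ih.2
      exact ⟨h1, by rw [hseq]; exact hcycΩ h1⟩
  have hΩmem : ∀ n, seq (2 * n) ∈ Ω := fun n => (hmem n).1
  have hΔmem : ∀ n, seq (2 * n + 1) ∈ Δ := fun n => (hmem n).2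
  -- consecutive distances
  have hge : ∀ n : ℕ, d ≤ ‖seq n - seq (n + 1)‖ := by
    intro n
    rcases Nat.even_or_odd n with ⟨k, hk⟩ | ⟨k, hk⟩
    · have hA : seq n ∈ Ω := by rw [hk, ← two_mul]; exact hΩmem k
      have hB : seq (n + 1) ∈ Δ := by rw [hseq]; exact hcycΩ hA
      exact hdle _ hA _ hB
    · have hB : seq n ∈ Δ := by rw [hk]; exact hΔmem k
      have hA : seq (n + 1) ∈ Ω := by rw [hseq]; exact hcycΔ hB
      rw [norm_sub_rev]
      exact hdle _ hA _ hB
  have hstep : ∀ n : ℕ,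
      ‖seq (n + 1) - seq (n + 1 + 1)‖ - d ≤ η * (‖seq n - seq (n + 1)‖ - d) := by
    intro n
    rcases Nat.even_or_odd n with ⟨k, hk⟩ | ⟨k, hk⟩
    · have hA : seq n ∈ Ω := by rw [hk, ← two_mul]; exact hΩmem k
      have hB : seq (n + 1) ∈ Δ := by rw [hseq]; exact hcycΩ hA
      have h := hc (seq n) hA (seq (n + 1)) hB
      rw [← hseq n, ← hseq (n + 1)] at h
      linarith
    · have hB : seq n ∈ Δ := by rw [hk]; exact hΔmem k
      have hA : seq (n + 1) ∈ Ω := by rw [hseq]; exact hcycΔ hB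
      have h := hc (seq (n + 1)) hA (seq n) hB
      rw [← hseq n, ← hseq (n + 1), norm_sub_rev (seq (n + 1 + 1)),
        norm_sub_rev (seq (n + 1)) (seq n)] at h
      linarith
  set C0 : ℝ := ‖seq 0 - seq 1‖ - d with hC0def
  have hC00 : 0 ≤ C0 := by have := hge 0; simp only [hC0def]; linarith
  have hgeom : ∀ n : ℕ, ‖seq n - seq (n + 1)‖ - d ≤ η ^ n * C0 := by
    intro n
    induction n with
    | zero => rw [pow_zero, one_mul, hC0def]
    | succ n ih =>
      calc ‖seq (n + 1) - seq (n + 1 + 1)‖ - d ≤ η * (‖seq n - seq (n + 1)‖ - d) := hstep n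
        _ ≤ η * (η ^ n * C0) := by
            exact mul_le_mul_of_nonneg_left ih hη0.le
        _ = η ^ (n + 1) * C0 := by ring
  clear_value C0
  -- boundedness
  set K : ℝ := η * ‖seq 2 - seq 0‖ + η * (1 - η) * d + (1 - η) * d with hKdef
  have hK0 : 0 ≤ K := by
    have h1 : (0:ℝ) ≤ η * ‖seq 2 - seq 0‖ := by positivity
    have h2 : (0:ℝ) ≤ η * (1 - η) * d := by
      apply mul_nonneg (mul_nonneg hη0.le (by linarith)) hd0
    have h3 : (0:ℝ) ≤ (1 - η) * d := mul_nonneg (by linarith) hd0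
    simp only [hKdef]; linarith
  set M : ℝ := max ‖seq 0 - seq 1‖ (K / (1 - η ^ 2)) with hMdef
  have hM0 : 0 ≤ M := le_trans (norm_nonneg _) (le_max_left _ _)
  have hη2 : 0 < 1 - η ^ 2 := by nlinarith
  have hKM : K ≤ (1 - η ^ 2) * M := by
    have h1 : K / (1 - η ^ 2) ≤ M := le_max_right _ _
    calc K = (1 - η ^ 2) * (K / (1 - η ^ 2)) := by field_simp
      _ ≤ (1 - η ^ 2) * M := mul_le_mul_of_nonneg_left h1 hη2.le
  have hbound : ∀ n : ℕ, ‖seq (2 * n) - seq 1‖ ≤ M := by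
    intro n
    induction n with
    | zero =>
      show ‖seq (2 * 0) - seq 1‖ ≤ M
      rw [show 2 * 0 = 0 from rfl]
      exact le_max_left _ _
    | succ n ih =>
      have h1src := hc (seq (2 * n)) (hΩmem n) (seq 1) (hΔmem 0)
      have e1 : seq (2 * n + 1) = Ξ (seq (2 * n)) := hseq _
      have e2 : seq 2 = Ξ (seq 1) := hseq 1
      rw [← e1, ← e2] at h1src
      -- h1src : ‖seq (2n+1) - seq 2‖ ≤ η * ‖seq (2n) - seq 1‖ + (1-η)d
      have h2src := hc (seq 0) (hseq0 ▸ hx₀) (seq (2 * n + 1)) (hΔmem n)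
      have e3 : seq 1 = Ξ (seq 0) := hseq 0
      have e4 : seq (2 * n + 1 + 1) = Ξ (seq (2 * n + 1)) := hseq _
      rw [← e3, ← e4, norm_sub_rev (seq 1), norm_sub_rev (seq 0)] at h2src
      -- h2src : ‖seq (2n+2) - seq 1‖ ≤ η * ‖seq (2n+1) - seq 0‖ + (1-η)d
      have tri : ‖seq (2 * n + 1) - seq 0‖ ≤ ‖seq (2 * n + 1) - seq 2‖ + ‖seq 2 - seq 0‖ :=
        norm_sub_le_norm_sub_add_norm_sub _ _ _
      have eidx : 2 * (n + 1) = 2 * n + 1 + 1 := by ring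
      rw [eidx]
      have hmul1 := mul_le_mul_of_nonneg_left h1src hη0.le
      have hmul2 := mul_le_mul_of_nonneg_left ih (mul_nonneg hη0.le hη0.le)
      simp only [hKdef] at hKM
      nlinarith [hmul1, hmul2, h2src, tri]
  clear_value K M
  -- pair estimate
  have hpair : ∀ n m : ℕ, ‖seq (2 * m + 2 * n) - seq (2 * n + 1)‖ - d ≤ η ^ (2 * n) * M := by
    intro n
    induction n with
    | zero =>
      intro m
      simp only [Nat.mul_zero, Nat.add_zero, Nat.zero_add, pow_zero, one_mul]
      have := hbound m
      linarith
    | succ n ih =>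
      intro m
      have ha : seq (2 * m + 2 * n) ∈ Ω := by
        rw [show 2 * m + 2 * n = 2 * (m + n) by ring]; exact hΩmem (m + n)
      have hb : seq (2 * n + 1) ∈ Δ := hΔmem n
      have h1 := hc _ ha _ hb
      have h2 := hc (Ξ (seq (2 * n + 1))) (hcycΔ hb) (Ξ (seq (2 * m + 2 * n))) (hcycΩ ha)
      rw [norm_sub_rev (Ξ (seq (2 * n + 1)))] at h2
      have ea1 : Ξ (seq (2 * m + 2 * n)) = seq (2 * m + 2 * n + 1) := (hseq _).symm
      have ea2 : Ξ (seq (2 * m + 2 * n + 1)) = seq (2 * m + 2 * n + 1 + 1) := (hseq _).symm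
      have eb1 : Ξ (seq (2 * n + 1)) = seq (2 * n + 1 + 1) := (hseq _).symm
      have eb2 : Ξ (seq (2 * n + 1 + 1)) = seq (2 * n + 1 + 1 + 1) := (hseq _).symm
      rw [ea1, eb1, ea2, eb2] at h2
      rw [ea1, eb1] at h1
      have eidx1 : 2 * m + 2 * (n + 1) = 2 * m + 2 * n + 1 + 1 := by ring
      have eidx2 : 2 * (n + 1) + 1 = 2 * n + 1 + 1 + 1 := by ring
      rw [eidx1, eidx2]
      have hpow : η ^ (2 * (n + 1)) = η ^ 2 * η ^ (2 * n) := by ring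
      rw [hpow]
      have ihm := ih m
      have hmul := mul_le_mul_of_nonneg_left h1 hη0.le
      have hmul2 := mul_le_mul_of_nonneg_left ihm
        (mul_nonneg hη0.le hη0.le : (0:ℝ) ≤ η * η)
      have hrev : ‖seq (2 * m + 2 * n + 1 + 1) - seq (2 * n + 1 + 1 + 1)‖
          = ‖seq (2 * n + 1 + 1 + 1) - seq (2 * m + 2 * n + 1 + 1)‖ := norm_sub_rev _ _
      rw [hrev]
      nlinarith [h2, hmul, hmul2]
  -- Cauchy
  have hcauchy : CauchySeq (fun n => seq (2 * n)) := by
    rw [Metric.cauchySeq_iff]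
    intro ε hε
    obtain ⟨δ, hδ0, hkey⟩ := aux_key Ω Δ hΩconv d hd0 hdle (half_pos hε)
    obtain ⟨N, hN⟩ := exists_pow_lt_of_lt_one
      (div_pos hδ0 (by linarith : (0:ℝ) < M + 1)) hη1
    have hbig : ∀ n : ℕ, N ≤ n → η ^ (2 * n) * M ≤ δ := by
      intro n hn
      have h1 : η ^ (2 * n) ≤ η ^ N :=
        pow_le_pow_of_le_one hη0.le hη1.le (by omega)
      have h2 : η ^ N * (M + 1) < δ := by
        rw [← lt_div_iff₀ (by linarith : (0:ℝ) < M + 1)]; exact hN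
      have h3 : η ^ (2 * n) * M ≤ η ^ N * M := mul_le_mul_of_nonneg_right h1 hM0
      have h4 : η ^ N * M ≤ η ^ N * (M + 1) :=
        mul_le_mul_of_nonneg_left (by linarith) (pow_nonneg hη0.le N)
      linarith
    have main : ∀ m n : ℕ, N ≤ n → n ≤ m → ‖seq (2 * m) - seq (2 * n)‖ ≤ ε / 2 := by
      intro m n hn hnm
      have hA : ‖seq (2 * m) - seq (2 * n + 1)‖ ≤ d + δ := by
        have := hpair n (m - n)
        rw [show 2 * (m - n) + 2 * n = 2 * m by omega] at this
        have := hbig n hn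
        linarith [hpair n (m - n), hbig n hn]
      have hB : ‖seq (2 * n) - seq (2 * n + 1)‖ ≤ d + δ := by
        have h := hpair n 0
        rw [show 2 * 0 + 2 * n = 2 * n by omega] at h
        linarith [hbig n hn]
      exact hkey _ (hΩmem m) _ (hΩmem n) _ (hΔmem n) hA hB
    refine ⟨N, fun m hm n hn => ?_⟩
    rw [dist_eq_norm]
    rcases le_total n m with h | h
    · calc ‖seq (2 * m) - seq (2 * n)‖ ≤ ε / 2 := main m n hn h
        _ < ε := by linarith
    · rw [norm_sub_rev]
      calc ‖seq (2 * n) - seq (2 * m)‖ ≤ ε / 2 := main n m hm h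
        _ < ε := by linarith
  obtain ⟨ϱ, hϱlim⟩ := cauchySeq_tendsto_of_complete hcauchy
  have hϱΩ : ϱ ∈ Ω := hΩc.mem_of_tendsto hϱlim (Filter.Eventually.of_forall fun n => hΩmem n)
  -- distance facts at the limit
  have he : Tendsto (fun n => ‖ϱ - seq (2 * n)‖) atTop (𝓝 0) := by
    have h := (tendsto_const_nhds (x := ϱ) (f := atTop)).sub hϱlim
    have := h.norm
    simpa using this
  have hcto : Tendsto (fun n => ‖seq (2 * n) - seq (2 * n + 1)‖) atTop (𝓝 d) := by
    have hsq0 : (0:ℝ) ≤ η ^ 2 := sq_nonneg η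
    have hsq1 : η ^ 2 < 1 := by nlinarith
    have hp0 : Tendsto (fun n : ℕ => (η ^ 2) ^ n) atTop (𝓝 0) :=
      tendsto_pow_atTop_nhds_zero_of_lt_one hsq0 hsq1
    have hup : Tendsto (fun n : ℕ => d + (η ^ 2) ^ n * C0) atTop (𝓝 (d + 0 * C0)) :=
      tendsto_const_nhds.add (hp0.mul_const C0)
    rw [show d + 0 * C0 = d by ring] at hup
    apply tendsto_of_tendsto_of_tendsto_of_le_of_le tendsto_const_nhds hup
    · intro n; exact hge (2 * n)
    · intro n
      have := hgeom (2 * n)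
      rw [pow_mul] at this
      show ‖seq (2 * n) - seq (2 * n + 1)‖ ≤ d + (η ^ 2) ^ n * C0
      linarith
  have hϱd : ‖ϱ - Ξ ϱ‖ = d := by
    refine le_antisymm ?_ (hdle _ hϱΩ _ (hcycΩ hϱΩ))
    have hb : ∀ n : ℕ, ‖ϱ - Ξ ϱ‖ ≤ ‖ϱ - seq (2 * (n + 1))‖ +
        (η * (‖ϱ - seq (2 * n)‖ + ‖seq (2 * n) - seq (2 * n + 1)‖) + (1 - η) * d) := by
      intro n
      have h1 := hc ϱ hϱΩ (seq (2 * n + 1)) (hΔmem n)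
      have e : seq (2 * (n + 1)) = Ξ (seq (2 * n + 1)) := by
        rw [show 2 * (n + 1) = 2 * n + 1 + 1 by ring]; exact hseq _
      have tri1 : ‖ϱ - seq (2 * n + 1)‖ ≤ ‖ϱ - seq (2 * n)‖ + ‖seq (2 * n) - seq (2 * n + 1)‖ :=
        norm_sub_le_norm_sub_add_norm_sub _ _ _
      have tri2 : ‖ϱ - Ξ ϱ‖ ≤ ‖ϱ - seq (2 * (n + 1))‖ + ‖seq (2 * (n + 1)) - Ξ ϱ‖ :=
        norm_sub_le_norm_sub_add_norm_sub _ _ _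
      have e2 : ‖seq (2 * (n + 1)) - Ξ ϱ‖ = ‖Ξ ϱ - Ξ (seq (2 * n + 1))‖ := by
        rw [e, norm_sub_rev]
      have hmul := mul_le_mul_of_nonneg_left tri1 hη0.le
      linarith [h1, tri2, e2.le, e2.ge, hmul]
    have hT : Tendsto (fun n : ℕ => ‖ϱ - seq (2 * (n + 1))‖ +
        (η * (‖ϱ - seq (2 * n)‖ + ‖seq (2 * n) - seq (2 * n + 1)‖) + (1 - η) * d)) atTop
        (𝓝 (0 + (η * (0 + d) + (1 - η) * d))) := by
      have he1 : Tendsto (fun n : ℕ => ‖ϱ - seq (2 * (n + 1))‖) atTop (𝓝 0) :=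
        he.comp (tendsto_add_atTop_nat 1)
      exact he1.add (((he.add hcto).const_mul η).add tendsto_const_nhds)
    have := ge_of_tendsto' hT hb
    linarith [this]
  -- uniqueness ingredients
  have huniq : ∀ x ∈ Ω, ∀ y ∈ Ω, ∀ z ∈ Δ, ‖x - z‖ = d → ‖y - z‖ = d → x = y := by
    intro x hx y hy z hz h1 h2
    have hall : ∀ ε > (0:ℝ), ‖x - y‖ ≤ ε := by
      intro ε hε
      obtain ⟨δ, hδ0, hkey⟩ := aux_key Ω Δ hΩconv d hd0 hdle hε
      exact hkey x hx y hy z hz (by linarith) (by linarith)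
    have h0 : ‖x - y‖ ≤ 0 := le_of_forall_pos_le_add (by intro ε hε; linarith [hall ε hε])
    have := norm_le_zero_iff.mp h0
    exact sub_eq_zero.mp this
  have hfix : ∀ p, p ∈ Ω → ‖p - Ξ p‖ = d → Ξ (Ξ p) = p := by
    intro p hp hpd
    have h1 : Ξ p ∈ Δ := hcycΩ hp
    have h2 : Ξ (Ξ p) ∈ Ω := hcycΔ h1
    have h3 := hc p hp (Ξ p) h1
    rw [hpd] at h3
    have h4 : d ≤ ‖Ξ (Ξ p) - Ξ p‖ := hdle _ h2 _ h1
    have h5 : ‖Ξ (Ξ p) - Ξ p‖ = d := by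
      rw [norm_sub_rev]; rw [norm_sub_rev] at h4; linarith
    exact (huniq p hp (Ξ (Ξ p)) h2 (Ξ p) h1 hpd h5).symm
  refine ⟨ϱ, ⟨hϱΩ, hϱd⟩, ?_⟩
  rintro p ⟨hp, hpd⟩
  have hfp := hfix p hp hpd
  have hfϱ := hfix ϱ hϱΩ hϱd
  have hs1 : d ≤ ‖p - Ξ ϱ‖ := hdle _ hp _ (hcycΩ hϱΩ)
  have hA := hc p hp (Ξ ϱ) (hcycΩ hϱΩ)
  rw [hfϱ] at hA
  have hB := hc ϱ hϱΩ (Ξ p) (hcycΩ hp)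
  rw [hfp] at hB
  have e1 : ‖ϱ - Ξ p‖ = ‖Ξ p - ϱ‖ := norm_sub_rev _ _
  have e2 : ‖Ξ ϱ - p‖ = ‖p - Ξ ϱ‖ := norm_sub_rev _ _
  have hs2 : ‖p - Ξ ϱ‖ ≤ d := by
    nlinarith [mul_le_mul_of_nonneg_left hA hη0.le, hB, hs1, e1, e2]
  exact huniq p hp ϱ hϱΩ (Ξ ϱ) (hcycΩ hϱΩ) (le_antisymm hs2 hs1) hϱd
end
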